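/- Let p be an odd prime and let Λ = Λ(0; 1, 0, 1; 0, 1, 0; 0) in the Zorn vector matrices over ℚ_p. Then Λ is an order, its dual is Λ* = Λ(0; 0, −1, 0; −1, 0, −1; 0), there are strict inclusions Λ ⊊ Λ* ⊊ p⁻¹·Λ, and the ℤ_p-submodule M generated by Λ together with {p·(x * y) : x, y ∈ Λ*} equals Λ(0; 0, −1, 0; 0, 1, 0; 0) and is self-dual: M* = M. (Hence Λ is an order of type 3.) -/

import Mathlib

open Matrix Pointwise

/-- A Zorn vector matrix (split octonion) over `k`. -/
abbrev Zorn (k : Type*) := k × (Fin 3 → k) × (Fin 3 → k) × k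

/-- The Zorn product of two Zorn vector matrices. -/
def zmul {k : Type*} [Field k] (x y : Zorn k) : Zorn k :=
  (x.1 * y.1 + x.2.1 ⬝ᵥ y.2.2.1,
   x.1 • y.2.1 + y.2.2.2 • x.2.1 - x.2.2.1 ⨯₃ y.2.2.1,
   y.1 • x.2.2.1 + x.2.2.2 • y.2.2.1 + x.2.1 ⨯₃ y.2.1,
   x.2.2.2 * y.2.2.2 + x.2.2.1 ⬝ᵥ y.2.1)

/-- The identity Zorn vector matrix. -/
def zone {k : Type*} [Field k] : Zorn k := (1, 0, 0, 1)

/-- The trace of a Zorn vector matrix. -/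
def zT {k : Type*} [Field k] (x : Zorn k) : k := x.1 + x.2.2.2

variable (p : ℕ) [Fact p.Prime]

/-- `a` lies in `p^n ℤ_p ⊆ ℚ_p`. -/
def inLat (n : ℤ) (a : ℚ_[p]) : Prop := ∃ z : ℤ_[p], a = (p : ℚ_[p]) ^ n * (z : ℚ_[p])

/-- The lattice `Λ(a₁; a₂, a₃, a₄; a₅, a₆, a₇; a₈)` of Zorn vector matrices over `ℚ_p`. -/
def Lam (a₁ a₂ a₃ a₄ a₅ a₆ a₇ a₈ : ℤ) : Set (Zorn ℚ_[p]) :=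
  {x | inLat p a₁ x.1 ∧ inLat p a₂ (x.2.1 0) ∧ inLat p a₃ (x.2.1 1) ∧
       inLat p a₄ (x.2.1 2) ∧ inLat p a₅ (x.2.2.1 0) ∧ inLat p a₆ (x.2.2.1 1) ∧
       inLat p a₇ (x.2.2.1 2) ∧ inLat p a₈ x.2.2.2}

/-- A set of Zorn vector matrices is an order if it contains `1` and is
closed under the Zorn product. -/
def IsOrder (S : Set (Zorn ℚ_[p])) : Prop :=
  zone ∈ S ∧ ∀ x ∈ S, ∀ y ∈ S, zmul x y ∈ S

/-- The dual of a set of Zorn vector matrices with respect to the trace form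
`T(x * y)`. -/
def dualLat (S : Set (Zorn ℚ_[p])) : Set (Zorn ℚ_[p]) :=
  {x | ∀ y ∈ S, ∃ z : ℤ_[p], (z : ℚ_[p]) = zT (zmul x y)}

/-!
All lattices involved are coordinatewise, `Λ(a) = ∏ pᵃⁱℤ_p`, so every claim reduces to
exponent bookkeeping. The trace form `T(x * y)` pairs `a` with `a`, `d` with `d` and `vᵢ` with
`wᵢ`; testing against the scaled coordinate vectors therefore gives
`Λ(a₁; a₂, a₃, a₄; a₅, a₆, a₇; a₈)* = Λ(-a₁; -a₅, -a₆, -a₇; -a₂, -a₃, -a₄; -a₈)`.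
Each coordinate of a Zorn product is a sum of products of coordinates, so a product of two
such lattices lies in the lattice bounded by the exponents of the monomials; this gives that
`Λ` is an order and that `M ⊆ Λ(0; 0, -1, 0; 0, 1, 0; 0)`. Conversely, for pure-`w` elements
the product is `(0, -(w × w'), 0, 0)`, and two such products of elements of `Λ*` already
fill the `v`-coordinates of `Λ(0; 0, -1, 0; 0, 1, 0; 0)`, whose remaining part lies in `Λ`.
-/

section

variable {p}

lemma cast_prime_ne_zero : (p : ℚ_[p]) ≠ 0 :=
  Nat.cast_ne_zero.2 (Fact.out : p.Prime).ne_zero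

@[simp]
lemma inLat_zero (n : ℤ) : inLat p n 0 := ⟨0, by simp⟩

lemma inLat_zero_iff {a : ℚ_[p]} : inLat p 0 a ↔ ∃ z : ℤ_[p], (z : ℚ_[p]) = a := by
  simp [inLat, eq_comm]

lemma inLat_intCast (z : ℤ_[p]) : inLat p 0 (z : ℚ_[p]) := inLat_zero_iff.2 ⟨z, rfl⟩

lemma inLat_add {n : ℤ} {a b : ℚ_[p]} (ha : inLat p n a) (hb : inLat p n b) :
    inLat p n (a + b) := by
  obtain ⟨z, rfl⟩ := ha
  obtain ⟨w, rfl⟩ := hb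
  exact ⟨z + w, by push_cast; ring⟩

@[simp]
lemma inLat_neg_iff {n : ℤ} {a : ℚ_[p]} : inLat p n (-a) ↔ inLat p n a :=
  ⟨fun ⟨z, hz⟩ => ⟨-z, by push_cast; linear_combination -hz⟩,
    fun ⟨z, hz⟩ => ⟨-z, by push_cast; linear_combination -hz⟩⟩

lemma inLat_sub {n : ℤ} {a b : ℚ_[p]} (ha : inLat p n a) (hb : inLat p n b) :
    inLat p n (a - b) :=
  sub_eq_add_neg a b ▸ inLat_add ha (inLat_neg_iff.2 hb)

lemma inLat_mul {m n : ℤ} {a b : ℚ_[p]} (ha : inLat p m a) (hb : inLat p n b) :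
    inLat p (m + n) (a * b) := by
  obtain ⟨z, rfl⟩ := ha
  obtain ⟨w, rfl⟩ := hb
  exact ⟨z * w, by push_cast; rw [zpow_add₀ cast_prime_ne_zero]; ring⟩

lemma inLat_mono {m n : ℤ} {a : ℚ_[p]} (h : m ≤ n) (ha : inLat p n a) : inLat p m a := by
  obtain ⟨z, rfl⟩ := ha
  obtain ⟨k, hk⟩ := Int.eq_ofNat_of_zero_le (sub_nonneg.2 h)
  refine ⟨p ^ k * z, ?_⟩
  rw [show n = m + k by omega, zpow_add₀ cast_prime_ne_zero, zpow_natCast]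
  push_cast
  ring

lemma inLat_mul_of_le {c m n : ℤ} {a b : ℚ_[p]} (h : c ≤ m + n) (ha : inLat p m a)
    (hb : inLat p n b) : inLat p c (a * b) :=
  inLat_mono h (inLat_mul ha hb)

lemma inLat_smul {n : ℤ} {a : ℚ_[p]} (z : ℤ_[p]) (ha : inLat p n a) : inLat p n (z • a) :=
  inLat_mul_of_le (by omega) (inLat_intCast z) ha

lemma inLat_zpow_mul_iff {m n : ℤ} {a : ℚ_[p]} :
    inLat p m ((p : ℚ_[p]) ^ n * a) ↔ inLat p (m - n) a := by
  have hpn : (p : ℚ_[p]) ^ n ≠ 0 := zpow_ne_zero n cast_prime_ne_zero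
  simp only [inLat, zpow_sub₀ cast_prime_ne_zero]
  refine exists_congr fun z => ⟨fun h => ?_, fun h => ?_⟩
  · field_simp
    linear_combination h
  · rw [h]
    field_simp

@[simp]
lemma inLat_inv_mul_iff {m : ℤ} {a : ℚ_[p]} :
    inLat p m ((p : ℚ_[p])⁻¹ * a) ↔ inLat p (m + 1) a := by
  simpa using inLat_zpow_mul_iff (p := p) (m := m) (n := -1) (a := a)

@[simp]
lemma inLat_zpow_iff {m n : ℤ} : inLat p m ((p : ℚ_[p]) ^ n) ↔ m ≤ n := by
  refine ⟨fun ⟨z, hz⟩ => ?_, fun h => inLat_mono h ⟨1, by simp⟩⟩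
  have hp : (1 : ℝ) < p := by exact_mod_cast (Fact.out : p.Prime).one_lt
  have hnorm : (p : ℝ) ^ (-n) ≤ (p : ℝ) ^ (-m) := by
    have := congrArg norm hz
    simp only [norm_mul, norm_zpow, Padic.norm_p, _root_.inv_zpow'] at this
    rw [this]
    exact mul_le_of_le_one_right (by positivity) z.2
  linarith [(zpow_le_zpow_iff_right₀ hp).1 hnorm]

@[simp]
lemma inLat_one_iff {m : ℤ} : inLat p m 1 ↔ m ≤ 0 := by
  simpa using inLat_zpow_iff (p := p) (m := m) (n := 0)

@[simp]
lemma inLat_inv_iff {m : ℤ} : inLat p m (p : ℚ_[p])⁻¹ ↔ m ≤ -1 := by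
  simpa using inLat_zpow_iff (p := p) (m := m) (n := -1)

variable (p) in
def lamSubmodule (a₁ a₂ a₃ a₄ a₅ a₆ a₇ a₈ : ℤ) : Submodule ℤ_[p] (Zorn ℚ_[p]) where
  carrier := Lam p a₁ a₂ a₃ a₄ a₅ a₆ a₇ a₈
  add_mem' := by
    rintro x y ⟨x1, xv0, xv1, xv2, xw0, xw1, xw2, x8⟩ ⟨y1, yv0, yv1, yv2, yw0, yw1, yw2, y8⟩
    exact ⟨inLat_add x1 y1, inLat_add xv0 yv0, inLat_add xv1 yv1, inLat_add xv2 yv2,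
      inLat_add xw0 yw0, inLat_add xw1 yw1, inLat_add xw2 yw2, inLat_add x8 y8⟩
  zero_mem' := by simp [Lam]
  smul_mem' := by
    rintro z x ⟨x1, xv0, xv1, xv2, xw0, xw1, xw2, x8⟩
    exact ⟨inLat_smul z x1, inLat_smul z xv0, inLat_smul z xv1, inLat_smul z xv2,
      inLat_smul z xw0, inLat_smul z xw1, inLat_smul z xw2, inLat_smul z x8⟩

lemma Lam_mono {a₁ a₂ a₃ a₄ a₅ a₆ a₇ a₈ b₁ b₂ b₃ b₄ b₅ b₆ b₇ b₈ : ℤ}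
    (h : b₁ ≤ a₁ ∧ b₂ ≤ a₂ ∧ b₃ ≤ a₃ ∧ b₄ ≤ a₄ ∧ b₅ ≤ a₅ ∧ b₆ ≤ a₆ ∧ b₇ ≤ a₇ ∧ b₈ ≤ a₈) :
    Lam p a₁ a₂ a₃ a₄ a₅ a₆ a₇ a₈ ⊆ Lam p b₁ b₂ b₃ b₄ b₅ b₆ b₇ b₈ := by
  obtain ⟨h1, h2, h3, h4, h5, h6, h7, h8⟩ := h
  rintro x ⟨x1, xv0, xv1, xv2, xw0, xw1, xw2, x8⟩
  exact ⟨inLat_mono h1 x1, inLat_mono h2 xv0, inLat_mono h3 xv1, inLat_mono h4 xv2,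
    inLat_mono h5 xw0, inLat_mono h6 xw1, inLat_mono h7 xw2, inLat_mono h8 x8⟩

lemma zpow_smul_Lam (n a₁ a₂ a₃ a₄ a₅ a₆ a₇ a₈ : ℤ) :
    (p : ℚ_[p]) ^ n • Lam p a₁ a₂ a₃ a₄ a₅ a₆ a₇ a₈ =
      Lam p (a₁ + n) (a₂ + n) (a₃ + n) (a₄ + n) (a₅ + n) (a₆ + n) (a₇ + n) (a₈ + n) := by
  ext x
  rw [Set.mem_smul_set_iff_inv_smul_mem₀ (zpow_ne_zero n cast_prime_ne_zero), ← _root_.zpow_neg]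
  simp only [Lam, Set.mem_ofPred_eq, Prod.smul_fst, Prod.smul_snd, Pi.smul_apply, smul_eq_mul,
    inLat_zpow_mul_iff, sub_neg_eq_add]

lemma zT_zmul {k : Type*} [Field k] (x y : Zorn k) :
    zT (zmul x y) = x.1 * y.1 + x.2.1 ⬝ᵥ y.2.2.1 + (x.2.2.2 * y.2.2.2 + x.2.2.1 ⬝ᵥ y.2.1) :=
  rfl

lemma zmul_pure_w {k : Type*} [Field k] (w w' : Fin 3 → k) :
    zmul (0, 0, w, 0) (0, 0, w', 0) = (0, -(w ⨯₃ w'), 0, 0) := by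
  simp [zmul]

-- One inequality for each monomial of each coordinate of the Zorn product.
lemma zmul_mem_Lam {x y : Zorn ℚ_[p]}
    {a₁ a₂ a₃ a₄ a₅ a₆ a₇ a₈ b₁ b₂ b₃ b₄ b₅ b₆ b₇ b₈ c₁ c₂ c₃ c₄ c₅ c₆ c₇ c₈ : ℤ}
    (hx : x ∈ Lam p a₁ a₂ a₃ a₄ a₅ a₆ a₇ a₈) (hy : y ∈ Lam p b₁ b₂ b₃ b₄ b₅ b₆ b₇ b₈)
    (H : c₁ ≤ a₁ + b₁ ∧ c₁ ≤ a₂ + b₅ ∧ c₁ ≤ a₃ + b₆ ∧ c₁ ≤ a₄ + b₇ ∧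
         c₂ ≤ a₁ + b₂ ∧ c₂ ≤ b₈ + a₂ ∧ c₂ ≤ a₆ + b₇ ∧ c₂ ≤ a₇ + b₆ ∧
         c₃ ≤ a₁ + b₃ ∧ c₃ ≤ b₈ + a₃ ∧ c₃ ≤ a₇ + b₅ ∧ c₃ ≤ a₅ + b₇ ∧
         c₄ ≤ a₁ + b₄ ∧ c₄ ≤ b₈ + a₄ ∧ c₄ ≤ a₅ + b₆ ∧ c₄ ≤ a₆ + b₅ ∧
         c₅ ≤ b₁ + a₅ ∧ c₅ ≤ a₈ + b₅ ∧ c₅ ≤ a₃ + b₄ ∧ c₅ ≤ a₄ + b₃ ∧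
         c₆ ≤ b₁ + a₆ ∧ c₆ ≤ a₈ + b₆ ∧ c₆ ≤ a₄ + b₂ ∧ c₆ ≤ a₂ + b₄ ∧
         c₇ ≤ b₁ + a₇ ∧ c₇ ≤ a₈ + b₇ ∧ c₇ ≤ a₂ + b₃ ∧ c₇ ≤ a₃ + b₂ ∧
         c₈ ≤ a₈ + b₈ ∧ c₈ ≤ a₅ + b₂ ∧ c₈ ≤ a₆ + b₃ ∧ c₈ ≤ a₇ + b₄) :
    zmul x y ∈ Lam p c₁ c₂ c₃ c₄ c₅ c₆ c₇ c₈ := by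
  obtain ⟨x1, xv0, xv1, xv2, xw0, xw1, xw2, x8⟩ := hx
  obtain ⟨y1, yv0, yv1, yv2, yw0, yw1, yw2, y8⟩ := hy
  obtain ⟨h1, h2, h3, h4, h5, h6, h7, h8, h9, h10, h11, h12, h13, h14, h15, h16,
    h17, h18, h19, h20, h21, h22, h23, h24, h25, h26, h27, h28, h29, h30, h31, h32⟩ := H
  refine ⟨?_, ?_, ?_, ?_, ?_, ?_, ?_, ?_⟩ <;>
    simp only [zmul, dotProduct, Fin.sum_univ_three, Pi.add_apply, Pi.sub_apply,
      Pi.smul_apply, smul_eq_mul, cross_apply, Matrix.cons_val_zero, Matrix.cons_val_one,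
      Matrix.cons_val_two, Matrix.tail_cons]
  · exact inLat_add (inLat_mul_of_le h1 x1 y1) (inLat_add (inLat_add
      (inLat_mul_of_le h2 xv0 yw0) (inLat_mul_of_le h3 xv1 yw1)) (inLat_mul_of_le h4 xv2 yw2))
  · exact inLat_sub (inLat_add (inLat_mul_of_le h5 x1 yv0) (inLat_mul_of_le h6 y8 xv0))
      (inLat_sub (inLat_mul_of_le h7 xw1 yw2) (inLat_mul_of_le h8 xw2 yw1))
  · exact inLat_sub (inLat_add (inLat_mul_of_le h9 x1 yv1) (inLat_mul_of_le h10 y8 xv1))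
      (inLat_sub (inLat_mul_of_le h11 xw2 yw0) (inLat_mul_of_le h12 xw0 yw2))
  · exact inLat_sub (inLat_add (inLat_mul_of_le h13 x1 yv2) (inLat_mul_of_le h14 y8 xv2))
      (inLat_sub (inLat_mul_of_le h15 xw0 yw1) (inLat_mul_of_le h16 xw1 yw0))
  · exact inLat_add (inLat_add (inLat_mul_of_le h17 y1 xw0) (inLat_mul_of_le h18 x8 yw0))
      (inLat_sub (inLat_mul_of_le h19 xv1 yv2) (inLat_mul_of_le h20 xv2 yv1))
  · exact inLat_add (inLat_add (inLat_mul_of_le h21 y1 xw1) (inLat_mul_of_le h22 x8 yw1))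
      (inLat_sub (inLat_mul_of_le h23 xv2 yv0) (inLat_mul_of_le h24 xv0 yv2))
  · exact inLat_add (inLat_add (inLat_mul_of_le h25 y1 xw2) (inLat_mul_of_le h26 x8 yw2))
      (inLat_sub (inLat_mul_of_le h27 xv0 yv1) (inLat_mul_of_le h28 xv1 yv0))
  · exact inLat_add (inLat_mul_of_le h29 x8 y8) (inLat_add (inLat_add
      (inLat_mul_of_le h30 xw0 yv0) (inLat_mul_of_le h31 xw1 yv1)) (inLat_mul_of_le h32 xw2 yv2))

lemma inLat_of_mem_dualLat {S : Set (Zorn ℚ_[p])} {x y : Zorn ℚ_[p]} (hx : x ∈ dualLat p S)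
    (hy : y ∈ S) {c : ℚ_[p]} {n : ℤ} (h : zT (zmul x y) = (p : ℚ_[p]) ^ n * c) :
    inLat p (-n) c := by
  simpa using inLat_zpow_mul_iff.1 (inLat_zero_iff.2 (h ▸ hx y hy))

lemma Lam_subset_dualLat (a₁ a₂ a₃ a₄ a₅ a₆ a₇ a₈ : ℤ) :
    Lam p (-a₁) (-a₅) (-a₆) (-a₇) (-a₂) (-a₃) (-a₄) (-a₈) ⊆
      dualLat p (Lam p a₁ a₂ a₃ a₄ a₅ a₆ a₇ a₈) := by
  rintro x ⟨x1, xv0, xv1, xv2, xw0, xw1, xw2, x8⟩ y ⟨y1, yv0, yv1, yv2, yw0, yw1, yw2, y8⟩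
  rw [← inLat_zero_iff, zT_zmul]
  simp only [dotProduct, Fin.sum_univ_three]
  exact inLat_add
    (inLat_add (inLat_mul_of_le (by omega) x1 y1)
      (inLat_add (inLat_add (inLat_mul_of_le (by omega) xv0 yw0)
        (inLat_mul_of_le (by omega) xv1 yw1)) (inLat_mul_of_le (by omega) xv2 yw2)))
    (inLat_add (inLat_mul_of_le (by omega) x8 y8)
      (inLat_add (inLat_add (inLat_mul_of_le (by omega) xw0 yv0)
        (inLat_mul_of_le (by omega) xw1 yv1)) (inLat_mul_of_le (by omega) xw2 yv2)))

lemma dualLat_Lam_subset (a₁ a₂ a₃ a₄ a₅ a₆ a₇ a₈ : ℤ) :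
    dualLat p (Lam p a₁ a₂ a₃ a₄ a₅ a₆ a₇ a₈) ⊆
      Lam p (-a₁) (-a₅) (-a₆) (-a₇) (-a₂) (-a₃) (-a₄) (-a₈) := by
  intro x hx
  refine ⟨?_, ?_, ?_, ?_, ?_, ?_, ?_, ?_⟩
  · exact inLat_of_mem_dualLat hx (y := ((p : ℚ_[p]) ^ a₁, 0, 0, 0)) (by simp [Lam])
      (by simp [zT_zmul, mul_comm])
  · exact inLat_of_mem_dualLat hx (y := (0, 0, Pi.single 0 ((p : ℚ_[p]) ^ a₅), 0))
      (by simp [Lam]) (by simp [zT_zmul, mul_comm])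
  · exact inLat_of_mem_dualLat hx (y := (0, 0, Pi.single 1 ((p : ℚ_[p]) ^ a₆), 0))
      (by simp [Lam]) (by simp [zT_zmul, mul_comm])
  · exact inLat_of_mem_dualLat hx (y := (0, 0, Pi.single 2 ((p : ℚ_[p]) ^ a₇), 0))
      (by simp [Lam]) (by simp [zT_zmul, mul_comm])
  · exact inLat_of_mem_dualLat hx (y := (0, Pi.single 0 ((p : ℚ_[p]) ^ a₂), 0, 0))
      (by simp [Lam]) (by simp [zT_zmul, mul_comm])
  · exact inLat_of_mem_dualLat hx (y := (0, Pi.single 1 ((p : ℚ_[p]) ^ a₃), 0, 0))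
      (by simp [Lam]) (by simp [zT_zmul, mul_comm])
  · exact inLat_of_mem_dualLat hx (y := (0, Pi.single 2 ((p : ℚ_[p]) ^ a₄), 0, 0))
      (by simp [Lam]) (by simp [zT_zmul, mul_comm])
  · exact inLat_of_mem_dualLat hx (y := (0, 0, 0, (p : ℚ_[p]) ^ a₈)) (by simp [Lam])
      (by simp [zT_zmul, mul_comm])

lemma dualLat_Lam (a₁ a₂ a₃ a₄ a₅ a₆ a₇ a₈ : ℤ) :
    dualLat p (Lam p a₁ a₂ a₃ a₄ a₅ a₆ a₇ a₈) =
      Lam p (-a₁) (-a₅) (-a₆) (-a₇) (-a₂) (-a₃) (-a₄) (-a₈) :=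
  (dualLat_Lam_subset _ _ _ _ _ _ _ _).antisymm (Lam_subset_dualLat _ _ _ _ _ _ _ _)

variable (p) in
noncomputable def orderTypeModule (S : Set (Zorn ℚ_[p])) : Submodule ℤ_[p] (Zorn ℚ_[p]) :=
  Submodule.span ℤ_[p]
    (S ∪ {z | ∃ x ∈ dualLat p S, ∃ y ∈ dualLat p S, z = (p : ℚ_[p]) • zmul x y})

lemma orderTypeModule_Lam_subset :
    (orderTypeModule p (Lam p 0 1 0 1 0 1 0 0) : Set (Zorn ℚ_[p])) ⊆
      Lam p 0 0 (-1) 0 0 1 0 0 := by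
  refine (Submodule.span_le (p := lamSubmodule p 0 0 (-1) 0 0 1 0 0)).2 ?_
  rw [dualLat_Lam]
  rintro _ (hx | ⟨x, hx, y, hy, rfl⟩)
  · exact Lam_mono (by norm_num) hx
  · have hxy : zmul x y ∈ Lam p (-1) (-1) (-2) (-1) (-1) 0 (-1) (-1) :=
      zmul_mem_Lam hx hy (by norm_num)
    have hpxy := Set.smul_mem_smul_set (a := (p : ℚ_[p]) ^ (1 : ℤ)) hxy
    rw [zpow_smul_Lam, zpow_one] at hpxy
    exact Lam_mono (by norm_num) hpxy

lemma Lam_subset_orderTypeModule :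
    Lam p 0 0 (-1) 0 0 1 0 0 ⊆ orderTypeModule p (Lam p 0 1 0 1 0 1 0 0) := by
  rintro m ⟨ha, hv₀, hv₁, hv₂, hw₀, hw₁, hw₂, hd⟩
  have hsplit : m = (m.1, 0, m.2.2.1, m.2.2.2) +
      (p : ℚ_[p]) • zmul (0, 0, ![0, 1, 0], 0)
        (0, 0, ![(p : ℚ_[p])⁻¹ * m.2.1 2, 0, -((p : ℚ_[p])⁻¹ * m.2.1 0)], 0) +
      (p : ℚ_[p]) • zmul (0, 0, ![0, 0, (p : ℚ_[p])⁻¹], 0) (0, 0, ![-m.2.1 1, 0, 0], 0) := by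
    simp only [zmul_pure_w]
    refine Prod.ext (by simp) (Prod.ext ?_ (Prod.ext (by simp) (by simp)))
    ext i
    fin_cases i <;> simp [cross_apply, mul_inv_cancel_left₀ cast_prime_ne_zero]
  rw [hsplit, orderTypeModule]
  refine add_mem (add_mem (Submodule.subset_span (Or.inl ?_))
    (Submodule.subset_span (Or.inr ⟨_, ?_, _, ?_, rfl⟩)))
    (Submodule.subset_span (Or.inr ⟨_, ?_, _, ?_, rfl⟩))
  · exact ⟨ha, by simp, by simp, by simp, hw₀, hw₁, hw₂, hd⟩
  all_goals rw [dualLat_Lam]; simp [Lam, hv₀, hv₁, hv₂]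

end

theorem lam_type_three :
    IsOrder p (Lam p 0 1 0 1 0 1 0 0) ∧
    dualLat p (Lam p 0 1 0 1 0 1 0 0) = Lam p 0 0 (-1) 0 (-1) 0 (-1) 0 ∧
    Lam p 0 1 0 1 0 1 0 0 ⊂ dualLat p (Lam p 0 1 0 1 0 1 0 0) ∧
    dualLat p (Lam p 0 1 0 1 0 1 0 0) ⊂ ((p : ℚ_[p])⁻¹ • Lam p 0 1 0 1 0 1 0 0) ∧
    (Submodule.span ℤ_[p]
        (Lam p 0 1 0 1 0 1 0 0 ∪
          {z : Zorn ℚ_[p] | ∃ x ∈ dualLat p (Lam p 0 1 0 1 0 1 0 0),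
            ∃ y ∈ dualLat p (Lam p 0 1 0 1 0 1 0 0),
              z = (p : ℚ_[p]) • zmul x y}) : Set (Zorn ℚ_[p])) =
      Lam p 0 0 (-1) 0 0 1 0 0 ∧
    dualLat p (Lam p 0 0 (-1) 0 0 1 0 0) = Lam p 0 0 (-1) 0 0 1 0 0 := by
  have hdual : dualLat p (Lam p 0 1 0 1 0 1 0 0) = Lam p 0 0 (-1) 0 (-1) 0 (-1) 0 := by
    simpa using dualLat_Lam (p := p) 0 1 0 1 0 1 0 0
  refine ⟨⟨by simp [Lam, zone], fun x hx y hy => zmul_mem_Lam hx hy (by norm_num)⟩, hdual,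
    ?_, ?_, orderTypeModule_Lam_subset.antisymm Lam_subset_orderTypeModule,
    by simpa using dualLat_Lam (p := p) 0 0 (-1) 0 0 1 0 0⟩
  · rw [hdual, Set.ssubset_iff_of_subset (Lam_mono (by norm_num))]
    exact ⟨(0, Pi.single 0 1, 0, 0), by simp [Lam], by simp [Lam]⟩
  · rw [hdual, ← _root_.zpow_neg_one, zpow_smul_Lam,
      Set.ssubset_iff_of_subset (Lam_mono (by norm_num))]
    exact ⟨((p : ℚ_[p])⁻¹, 0, 0, 0), by simp [Lam], by simp [Lam]⟩
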